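/- Let n be a positive integer, let A and B be n×n row-stochastic real matrices, let 0 < c < 1, and let r_old ∈ ℝⁿ satisfy ‖r_old‖₁ = 1. Define q_offset = (1−c)·(Bᵀ − Aᵀ)·r_old. Then for every natural number k, the ℓ1 norm of the tail of the offset series satisfies ‖∑_{i=k}^∞ ((1−c)·Bᵀ)^i · q_offset‖₁ ≤ (2/c)·(1−c)^{k+1}. (Tail bound from the proof of Theorem 3.) -/

import Mathlib

open Matrix

/-- An `n × n` real matrix is row-stochastic if all its entries are nonnegative
and each of its rows sums to `1`. -/
def RowStochastic {n : ℕ} (M : Matrix (Fin n) (Fin n) ℝ) : Prop :=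
  (∀ i j, 0 ≤ M i j) ∧ ∀ i, ∑ j, M i j = 1

/-- The ℓ1 norm of a vector in `ℝⁿ`: the sum of absolute values of entries. -/
def l1norm {n : ℕ} (v : Fin n → ℝ) : ℝ := ∑ i, |v i|

/-!
Each step of the power series multiplies by `(1 - c) Bᵀ`, and `Bᵀ` is an ℓ1-contraction because
the columns of `Bᵀ` are probability vectors. Since `‖(Bᵀ - Aᵀ) r‖₁ ≤ ‖Bᵀ r‖₁ + ‖Aᵀ r‖₁ ≤ 2`, the
`i`-th term of the tail has ℓ1 norm at most `2 (1 - c)^(k + i + 1)`, and summing this geometric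
series gives `2 (1 - c)^(k + 1) / c`.
-/

section L1Norm

variable {n : ℕ}

theorem l1norm_eq_norm_toLp (v : Fin n → ℝ) : l1norm v = ‖WithLp.toLp 1 v‖ := by
  simp [l1norm, PiLp.norm_eq_of_L1]

theorem l1norm_smul (a : ℝ) (v : Fin n → ℝ) : l1norm (a • v) = |a| * l1norm v := by
  simp only [l1norm_eq_norm_toLp, WithLp.toLp_smul, norm_smul, Real.norm_eq_abs]

theorem l1norm_sub_le (v w : Fin n → ℝ) : l1norm (v - w) ≤ l1norm v + l1norm w := by
  simpa only [l1norm_eq_norm_toLp, WithLp.toLp_sub] using norm_sub_le _ _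

theorem l1norm_tsum_le_of_hasSum {ι : Type*} {f : ι → Fin n → ℝ} {g : ι → ℝ} {a : ℝ}
    (hg : HasSum g a) (hfg : ∀ i, l1norm (f i) ≤ g i) : l1norm (∑' i, f i) ≤ a := by
  have h : WithLp.toLp 1 (∑' i, f i) = ∑' i, WithLp.toLp 1 (f i) :=
    (PiLp.continuousLinearEquiv 1 ℝ fun _ : Fin n => ℝ).symm.map_tsum
  rw [l1norm_eq_norm_toLp, h]
  exact tsum_of_norm_bounded hg fun i => (l1norm_eq_norm_toLp (f i)).symm.trans_le (hfg i)

end L1Norm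

namespace RowStochastic

variable {n : ℕ} {M : Matrix (Fin n) (Fin n) ℝ}

theorem l1norm_transpose_mulVec_le (hM : RowStochastic M) (v : Fin n → ℝ) :
    l1norm (Mᵀ *ᵥ v) ≤ l1norm v := by
  unfold l1norm
  calc ∑ j, |(Mᵀ *ᵥ v) j| ≤ ∑ j, ∑ i, M i j * |v i| := by
        refine Finset.sum_le_sum fun j _ => ?_
        rw [mulVec, dotProduct]
        refine (Finset.abs_sum_le_sum_abs _ _).trans ?_
        refine Finset.sum_le_sum fun i _ => ?_
        rw [transpose_apply, abs_mul, abs_of_nonneg (hM.1 i j)]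
    _ = ∑ i, |v i| := by
        rw [Finset.sum_comm]
        simp only [← Finset.sum_mul, hM.2, one_mul]

theorem l1norm_transpose_pow_mulVec_le (hM : RowStochastic M) (v : Fin n → ℝ) (m : ℕ) :
    l1norm ((Mᵀ ^ m) *ᵥ v) ≤ l1norm v := by
  induction m with
  | zero => simp
  | succ m ih =>
    rw [pow_succ', ← mulVec_mulVec]
    exact (hM.l1norm_transpose_mulVec_le _).trans ih

theorem l1norm_transpose_sub_mulVec_le {N : Matrix (Fin n) (Fin n) ℝ} (hM : RowStochastic M)
    (hN : RowStochastic N) (v : Fin n → ℝ) :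
    l1norm ((Mᵀ - Nᵀ) *ᵥ v) ≤ 2 * l1norm v := by
  rw [sub_mulVec]
  linarith [l1norm_sub_le (Mᵀ *ᵥ v) (Nᵀ *ᵥ v), hM.l1norm_transpose_mulVec_le v,
    hN.l1norm_transpose_mulVec_le v]

end RowStochastic

theorem stmt_7_general {n : ℕ} (A B : Matrix (Fin n) (Fin n) ℝ)
    (hA : RowStochastic A) (hB : RowStochastic B)
    (c : ℝ) (hc0 : 0 < c) (hc1 : c < 1)
    (rold : Fin n → ℝ) (hrold : l1norm rold = 1)
    (qoffset : Fin n → ℝ)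
    (hqoffset : qoffset = (1 - c) • (Bᵀ - Aᵀ).mulVec rold)
    (k : ℕ) :
    l1norm (∑' i : ℕ, (((1 - c) • Bᵀ) ^ (k + i)).mulVec qoffset) ≤
      (2 / c) * (1 - c) ^ (k + 1) := by
  have hd0 : 0 ≤ 1 - c := by linarith
  have hq : l1norm qoffset ≤ 2 * (1 - c) := by
    rw [hqoffset, l1norm_smul, abs_of_nonneg hd0]
    nlinarith [hB.l1norm_transpose_sub_mulVec_le hA rold]
  have hgeom := (hasSum_geometric_of_lt_one hd0 (by linarith)).mul_left (2 * (1 - c) ^ (k + 1))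
  refine (l1norm_tsum_le_of_hasSum hgeom fun i => ?_).trans_eq (by rw [sub_sub_cancel]; ring)
  rw [smul_pow, smul_mulVec, l1norm_smul, abs_of_nonneg (pow_nonneg hd0 _)]
  calc (1 - c) ^ (k + i) * l1norm ((Bᵀ ^ (k + i)) *ᵥ qoffset)
      ≤ (1 - c) ^ (k + i) * (2 * (1 - c)) := by
        gcongr
        exact (hB.l1norm_transpose_pow_mulVec_le qoffset _).trans hq
    _ = 2 * (1 - c) ^ (k + 1) * (1 - c) ^ i := by ring

/-- Tail bound from the proof of Theorem 3: for every `k`,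
`‖∑_{i=k}^∞ ((1-c)Bᵀ)^i q_offset‖₁ ≤ (2/c)(1-c)^(k+1)`. -/
theorem stmt_7 {n : ℕ} (hn : 0 < n) (A B : Matrix (Fin n) (Fin n) ℝ)
    (hA : RowStochastic A) (hB : RowStochastic B)
    (c : ℝ) (hc0 : 0 < c) (hc1 : c < 1)
    (rold : Fin n → ℝ) (hrold : l1norm rold = 1)
    (qoffset : Fin n → ℝ)
    (hqoffset : qoffset = (1 - c) • (Bᵀ - Aᵀ).mulVec rold)
    (k : ℕ) :
    l1norm (∑' i : ℕ, (((1 - c) • Bᵀ) ^ (k + i)).mulVec qoffset) ≤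
      (2 / c) * (1 - c) ^ (k + 1) :=
  stmt_7_general A B hA hB c hc0 hc1 rold hrold qoffset hqoffset k
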